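/- If a continuous chain map φ: A• → B• of complexes of abelian topological groups is quasi-open, then for every n the induced map on cohomology H^n(A•) → H^n(B•) is open, where cohomology groups carry the quotient topology (cocycles with subspace topology modulo coboundaries). -/

import Mathlib

/-! Modulo coboundaries `φ a - d b` is congruent to `φ a`, so the image of an open set
`U ⊆ H^n(A•)` is the projection of the image of `π⁻¹ U × B^{n-1}` under the quasi-open map
`(a, b) ↦ φ a - d b`; projections of open sets to a quotient group are open. -/

/-- A (ℤ-graded) cochain complex of abelian topological groups with continuous
differentials. -/
structure TopComplex where
  X : ℤ → Type
  [grp : ∀ n, AddCommGroup (X n)]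
  [top : ∀ n, TopologicalSpace (X n)]
  [tgrp : ∀ n, IsTopologicalAddGroup (X n)]
  d : ∀ n, X n →+ X (n + 1)
  d_cont : ∀ n, Continuous (d n)
  d_comp_d : ∀ n x, d (n + 1) (d n x) = 0

attribute [instance] TopComplex.grp TopComplex.top TopComplex.tgrp

/-- The subgroup of `n`-cocycles; as a type it carries the subspace topology. -/
def TopComplex.Zsub (A : TopComplex) (n : ℤ) : AddSubgroup (A.X n) := (A.d n).ker

/-- The group of `n`-cocycles, with the subspace topology. -/
abbrev TopComplex.Z (A : TopComplex) (n : ℤ) : Type := A.Zsub n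

/-- The differential, corestricted to the cocycles. -/
def TopComplex.dRes (A : TopComplex) (n : ℤ) : A.X n →+ A.Z (n + 1) :=
  (A.d n).codRestrict (A.Zsub (n + 1)) fun x => by
    simp [TopComplex.Zsub, AddMonoidHom.mem_ker, A.d_comp_d]

/-- The coboundaries, as a subgroup of the cocycles. -/
def TopComplex.Bsub (A : TopComplex) (n : ℤ) : AddSubgroup (A.Z (n + 1)) :=
  (A.dRes n).range

/-- The cohomology group `H^{n+1}(A•) = Z^{n+1}(A•)/Im d^n`, with the quotient
topology (cocycles with the subspace topology, modulo coboundaries). -/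
abbrev TopComplex.H (A : TopComplex) (n : ℤ) : Type := A.Z (n + 1) ⧸ A.Bsub n

/-- A continuous chain map of complexes of abelian topological groups. -/
structure ChainMap (A B : TopComplex) where
  f : ∀ n, A.X n →+ B.X n
  cont : ∀ n, Continuous (f n)
  comm : ∀ n a, f (n + 1) (A.d n a) = B.d n (f n a)

/-- The induced map on cocycles. -/
def ChainMap.Zmap {A B : TopComplex} (φ : ChainMap A B) (n : ℤ) : A.Z n →+ B.Z n :=
  ((φ.f n).comp (A.Zsub n).subtype).codRestrict (B.Zsub n) fun x => by
    have hx : A.d n x.1 = 0 := x.2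
    have : B.d n (φ.f n x.1) = φ.f (n + 1) (A.d n x.1) := (φ.comm n x.1).symm
    show B.d n (φ.f n x.1) = 0
    rw [this, hx, map_zero]

/-- The induced map on cohomology. -/
def ChainMap.Hmap {A B : TopComplex} (φ : ChainMap A B) (n : ℤ) : A.H n →+ B.H n :=
  QuotientAddGroup.map (A.Bsub n) (B.Bsub n) (φ.Zmap (n + 1)) (by
    rintro z ⟨a, rfl⟩
    refine ⟨φ.f n a, ?_⟩
    ext
    exact (φ.comm n a).symm)

/-- A chain map `φ : A• → B•` is quasi-open if for every `n` the map
`Z^n(A•) ⊕ B^{n-1} → Z^n(B•)`, `(a, b) ↦ φ a − d_B b`, is open. -/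
def IsQuasiOpen {A B : TopComplex} (φ : ChainMap A B) : Prop :=
  ∀ n : ℤ, IsOpenMap (fun p : A.Z (n + 1) × B.X n =>
    (φ.Zmap (n + 1) p.1 - B.dRes n p.2 : B.Z (n + 1)))

theorem QuotientAddGroup.isOpenMap_map_range_of_isOpenMap_sub {G H K : Type*} [AddCommGroup G]
    [AddCommGroup H] [AddCommGroup K] [TopologicalSpace G] [TopologicalSpace H]
    [TopologicalSpace K] [SeparatelyContinuousAdd H] (N : AddSubgroup G) (f : G →+ H)
    (g : K →+ H) (hN : N ≤ g.range.comap f)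
    (hopen : IsOpenMap fun p : G × K => f p.1 - g p.2) :
    IsOpenMap (QuotientAddGroup.map N g.range f hN) := by
  intro U hU
  set W : Set G := (QuotientAddGroup.mk : G → G ⧸ N) ⁻¹' U
  have hmk : ∀ p : G × K, ((f p.1 - g p.2 : H) : H ⧸ g.range) = (f p.1 : H ⧸ g.range) :=
    fun p => QuotientAddGroup.eq_iff_sub_mem.mpr (by simp)
  have himage : QuotientAddGroup.map N g.range f hN '' U =
      QuotientAddGroup.mk '' ((fun p : G × K => f p.1 - g p.2) '' (W ×ˢ Set.univ)) := by
    calc QuotientAddGroup.map N g.range f hN '' U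
        = (fun a => (f a : H ⧸ g.range)) '' W := by
          rw [← Set.image_preimage_eq U QuotientAddGroup.mk_surjective, Set.image_image]; rfl
      _ = (fun a => (f a : H ⧸ g.range)) '' (Prod.fst '' (W ×ˢ Set.univ)) := by
          rw [Set.fst_image_prod _ (Set.univ_nonempty (α := K))]
      _ = _ := by simp only [Set.image_image, hmk]
  rw [himage]
  exact QuotientAddGroup.isOpenMap_coe _
    (hopen _ ((hU.preimage continuous_quot_mk).prod isOpen_univ))

/-- If a continuous chain map `φ : A• → B•` of complexes of abelian topological
groups is quasi-open, then for every `n` the induced map on cohomology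
`H^n(A•) → H^n(B•)` is open (cohomology carries the quotient topology). -/
theorem isOpenMap_Hmap_of_isQuasiOpen {A B : TopComplex} (φ : ChainMap A B)
    (hφ : IsQuasiOpen φ) : ∀ n : ℤ, IsOpenMap (φ.Hmap n) := fun n =>
  QuotientAddGroup.isOpenMap_map_range_of_isOpenMap_sub _ _ _ _ (hφ n)
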